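/- Let m < -2 and suppose f solves f''' + (m+2) f f'' - (2m+1)(f')^2 = 0 on [0,∞) with f(0) = -γ, f''(0) = -1 and f'(∞) = 0. Then f(t) < 0 for all t ≥ 0, and moreover for all t ≥ 0: 0 < f'(t)/f(t)² < -(m+2)/2 and 0 < f''(t)/f(t)³ < -(m+2) f'(t)/f(t)². -/

import Mathlib

/-!
Write `P = f' + (m+2)/2 f²` and `Q = f'' + (m+2) f f'`; the claimed bounds say exactly
`f < 0`, `f' > 0`, `f'' < 0`, `P < 0` and `Q > 0`. At a first zero `T` of `f''` the equation gives
`0 ≤ f'''(T) = (2m+1) f'(T)² ≤ 0`, so `f'(T) = f''(T) = 0` and uniqueness for the first-order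
system makes `f''` vanish on `[0, T]`, contradicting `f''(0) < 0`. Hence `f'` decreases to `0` and
is positive. If `f` reached `0`, `f''' ≤ 0` would make `f'` concave with negative slope, hence
eventually negative. Next `Q' = 3(m+1) f'² < 0` and `P' = Q`; since `P ≥ (m+2)/2 f(0)²` is bounded
below, `Q` cannot become negative, so `Q > 0`. Finally `P` increases and `P ≤ f' → 0`, so `P < 0`.
-/

open Filter Set Topology

section RealCalculus

variable {g g' u : ℝ → ℝ} {a L : ℝ}

theorem ContDiff.hasDerivAt_iteratedDeriv {f : ℝ → ℝ} {n : WithTop ℕ∞} {k : ℕ}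
    (hf : ContDiff ℝ n f) (hk : k < n) (t : ℝ) :
    HasDerivAt (iteratedDeriv k f) (iteratedDeriv (k + 1) f t) t := by
  rw [iteratedDeriv_succ]
  exact (hf.differentiable_iteratedDeriv k hk t).hasDerivAt

theorem strictMonoOn_Ici_of_hasDerivAt_pos (hd : ∀ x, HasDerivAt g (g' x) x)
    (hpos : ∀ x > a, 0 < g' x) : StrictMonoOn g (Ici a) :=
  strictMonoOn_of_hasDerivWithinAt_pos (convex_Ici a)
    (fun x _ => (hd x).continuousAt.continuousWithinAt) (fun x _ => (hd x).hasDerivWithinAt)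
    (fun x hx => hpos x (by simpa using hx))

theorem strictAntiOn_Ici_of_hasDerivAt_neg (hd : ∀ x, HasDerivAt g (g' x) x)
    (hneg : ∀ x > a, g' x < 0) : StrictAntiOn g (Ici a) :=
  strictAntiOn_of_hasDerivWithinAt_neg (convex_Ici a)
    (fun x _ => (hd x).continuousAt.continuousWithinAt) (fun x _ => (hd x).hasDerivWithinAt)
    (fun x hx => hneg x (by simpa using hx))

theorem antitoneOn_Ici_of_hasDerivAt_nonpos (hd : ∀ x, HasDerivAt g (g' x) x)
    (hnonpos : ∀ x > a, g' x ≤ 0) : AntitoneOn g (Ici a) :=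
  antitoneOn_of_hasDerivWithinAt_nonpos (convex_Ici a)
    (fun x _ => (hd x).continuousAt.continuousWithinAt) (fun x _ => (hd x).hasDerivWithinAt)
    (fun x hx => hnonpos x (by simpa using hx))

theorem StrictMonoOn.lt_of_le_of_tendsto (hg : StrictMonoOn g (Ici a))
    (hgu : ∀ x ≥ a, g x ≤ u x) (hu : Tendsto u atTop (𝓝 L)) {x : ℝ} (hx : a ≤ x) :
    g x < L := by
  have hle : g (x + 1) ≤ L := ge_of_tendsto hu <| (eventually_ge_atTop (x + 1)).mono
    fun y hy => (hg.monotoneOn (mem_Ici.2 (by linarith)) (mem_Ici.2 (by linarith)) hy).trans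
      (hgu y (by linarith))
  exact (hg hx (mem_Ici.2 (by linarith)) (lt_add_one x)).trans_le hle

theorem exists_lt_of_antitoneOn_deriv (hd : ∀ x, HasDerivAt g (g' x) x)
    (hanti : AntitoneOn g' (Ici a)) (ha : g' a < 0) (c : ℝ) : ∃ x ≥ a, g x < c := by
  have hchord : AntitoneOn (fun x => g x - g' a * x) (Ici a) :=
    antitoneOn_Ici_of_hasDerivAt_nonpos (fun x => ((hd x).sub ((hasDerivAt_id x).const_mul _)))
      fun x hx => by simpa using hanti self_mem_Ici (mem_Ici.2 hx.le) hx.le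
  set x := a + (|g a - c| + 1) / -g' a
  have hax : a ≤ x := le_add_of_nonneg_right (div_nonneg (by positivity) (by linarith))
  have hslope : g' a * (x - a) = -(|g a - c| + 1) := by
    simp only [x, add_sub_cancel_left]
    field_simp [ha.ne]
  refine ⟨x, hax, ?_⟩
  have := hchord self_mem_Ici hax hax
  simp only at this
  linarith [le_abs_self (g a - c)]

theorem exists_first_zero {b : ℝ} (hg : Continuous g) (hab : a ≤ b) (ha : g a < 0)
    (hb : 0 ≤ g b) : ∃ T > a, g T = 0 ∧ ∀ s ∈ Ico a T, g s < 0 := by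
  set S := Icc a b ∩ g ⁻¹' Ici 0
  have hS : IsCompact S := isCompact_Icc.inter_right (isClosed_Ici.preimage hg)
  have hbdd : BddBelow S := ⟨a, fun x hx => hx.1.1⟩
  obtain ⟨⟨haT, hTb⟩, hgT⟩ := hS.sInf_mem ⟨b, ⟨hab, le_rfl⟩, hb⟩
  set T := sInf S
  have hbefore : ∀ s ∈ Ico a T, g s < 0 := fun s hs => not_le.1 fun hgs =>
    (csInf_le hbdd ⟨⟨hs.1, hs.2.le.trans hTb⟩, hgs⟩).not_gt hs.2
  have hT : a < T := haT.lt_of_ne fun h => (h ▸ ha).not_ge hgT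
  refine ⟨T, hT, le_antisymm ?_ hgT, hbefore⟩
  refine le_of_tendsto (hg.continuousAt.tendsto.mono_left (nhdsWithin_le_nhds (s := Iio T))) ?_
  filter_upwards [Ioo_mem_nhdsLT hT] with s hs using (hbefore s ⟨hs.1.le, hs.2⟩).le

theorem HasDerivAt.nonneg_of_le_left {T g₀ : ℝ} (hd : HasDerivAt g g₀ T) (haT : a < T)
    (hle : ∀ s ∈ Ioo a T, g s ≤ g T) : 0 ≤ g₀ := by
  have hslope : Tendsto (slope g T) (𝓝[<] T) (𝓝 g₀) :=
    (hasDerivAt_iff_tendsto_slope.mp hd).mono_left (nhdsWithin_mono T fun s hs => ne_of_lt hs)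
  refine ge_of_tendsto hslope ?_
  filter_upwards [Ioo_mem_nhdsLT haT] with s hs
  rw [slope_def_field]
  exact div_nonneg_of_nonpos (by linarith [hle s hs]) (by linarith [hs.2])

end RealCalculus

structure IsSimilaritySolution (m : ℝ) (f : ℝ → ℝ) : Prop where
  contDiff : ContDiff ℝ 3 f
  ode : ∀ t ≥ (0:ℝ), iteratedDeriv 3 f t + (m + 2) * f t * iteratedDeriv 2 f t
    - (2 * m + 1) * (deriv f t) ^ 2 = 0

/-- The equation as a first-order system for `(f, f', f'')`. -/
def similarityField (m : ℝ) (p : ℝ × ℝ × ℝ) : ℝ × ℝ × ℝ :=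
  (p.2.1, p.2.2, (2 * m + 1) * p.2.1 ^ 2 - (m + 2) * p.1 * p.2.2)

theorem contDiff_similarityField (m : ℝ) : ContDiff ℝ 1 (similarityField m) := by
  unfold similarityField
  fun_prop

namespace IsSimilaritySolution

variable {m : ℝ} {f : ℝ → ℝ}

theorem hasDerivAt_self (hsol : IsSimilaritySolution m f) (t : ℝ) :
    HasDerivAt f (deriv f t) t :=
  (hsol.contDiff.differentiable (by norm_num) t).hasDerivAt

theorem hasDerivAt_deriv (hsol : IsSimilaritySolution m f) (t : ℝ) :
    HasDerivAt (deriv f) (iteratedDeriv 2 f t) t := by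
  simpa using hsol.contDiff.hasDerivAt_iteratedDeriv (k := 1) (by norm_num) t

theorem hasDerivAt_iteratedDeriv_two (hsol : IsSimilaritySolution m f) (t : ℝ) :
    HasDerivAt (iteratedDeriv 2 f) (iteratedDeriv 3 f t) t :=
  hsol.contDiff.hasDerivAt_iteratedDeriv (by norm_num) t

theorem iteratedDeriv_three_eq (hsol : IsSimilaritySolution m f) {t : ℝ} (ht : 0 ≤ t) :
    iteratedDeriv 3 f t = (2 * m + 1) * deriv f t ^ 2 - (m + 2) * f t * iteratedDeriv 2 f t := by
  linarith [hsol.ode t ht]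

theorem hasDerivAt_trajectory (hsol : IsSimilaritySolution m f) {t : ℝ} (ht : 0 ≤ t) :
    HasDerivAt (fun s => (f s, deriv f s, iteratedDeriv 2 f s))
      (similarityField m (f t, deriv f t, iteratedDeriv 2 f t)) t := by
  have := (hsol.hasDerivAt_self t).prodMk
    ((hsol.hasDerivAt_deriv t).prodMk (hsol.hasDerivAt_iteratedDeriv_two t))
  rwa [hsol.iteratedDeriv_three_eq ht] at this

/-- `(f, f', f'')` reaches an equilibrium of `similarityField` at `T`, so by uniqueness it has
stayed there. -/
theorem iteratedDeriv_two_eq_zero_of_deriv_eq_zero (hsol : IsSimilaritySolution m f)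
    {T : ℝ} (hT : 0 ≤ T) (h1 : deriv f T = 0) (h2 : iteratedDeriv 2 f T = 0) : ∀ t ∈ Icc 0 T, iteratedDeriv 2 f t = 0 := by
  set F : ℝ → ℝ × ℝ × ℝ := fun s => (f s, deriv f s, iteratedDeriv 2 f s)
  have hFc : Continuous F := continuous_iff_continuousAt.2 fun t =>
    ((hsol.hasDerivAt_self t).prodMk ((hsol.hasDerivAt_deriv t).prodMk
      (hsol.hasDerivAt_iteratedDeriv_two t))).continuousAt
  have hK : IsCompact (F '' Icc 0 T) := isCompact_Icc.image hFc
  obtain ⟨K, hK⟩ := ((contDiff_similarityField m).locallyLipschitz.locallyLipschitzOn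
    ).exists_lipschitzOnWith_of_compact hK
  have hrest : similarityField m (F T) = 0 := by simp [F, similarityField, h1, h2]
  have hFT := ODE_solution_unique_of_mem_Icc_left (v := fun _ => similarityField m)
    (s := fun _ => F '' Icc 0 T) (g := fun _ => F T) (fun _ _ => hK) hFc.continuousOn
    (fun t ht => (hsol.hasDerivAt_trajectory ht.1.le).hasDerivWithinAt)
    (fun t ht => mem_image_of_mem F (Ioc_subset_Icc_self ht)) continuousOn_const
    (fun _ _ => hrest ▸ hasDerivWithinAt_const _ _ _)
    (fun _ _ => mem_image_of_mem F ⟨hT, le_rfl⟩) rfl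
  intro t ht
  simpa [F, h2] using congrArg (fun p => p.2.2) (hFT ht)

theorem iteratedDeriv_two_neg (hsol : IsSimilaritySolution m f) (hm : 2 * m + 1 < 0) (h0 : iteratedDeriv 2 f 0 < 0) {t : ℝ} (ht : 0 ≤ t) :
    iteratedDeriv 2 f t < 0 := by
  by_contra! hnonneg
  obtain ⟨T, hT, hT2, hbefore⟩ := exists_first_zero
    (hsol.contDiff.continuous_iteratedDeriv 2 (by norm_num)) ht h0 hnonneg
  have h3 : 0 ≤ iteratedDeriv 3 f T := (hsol.hasDerivAt_iteratedDeriv_two T).nonneg_of_le_left hT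
    fun s hs => hT2 ▸ (hbefore s ⟨hs.1.le, hs.2⟩).le
  rw [hsol.iteratedDeriv_three_eq hT.le, hT2, mul_zero, sub_zero] at h3
  have h1 : deriv f T = 0 := pow_eq_zero_iff two_ne_zero |>.1 <|
    le_antisymm (nonpos_of_mul_nonneg_right h3 hm) (sq_nonneg _)
  exact h0.ne (hsol.iteratedDeriv_two_eq_zero_of_deriv_eq_zero hT.le h1 hT2 0 ⟨le_rfl, hT.le⟩)

theorem deriv_pos (hsol : IsSimilaritySolution m f) (hm : 2 * m + 1 < 0)
    (h0 : iteratedDeriv 2 f 0 < 0) (hlim : Tendsto (deriv f) atTop (𝓝 0)) {t : ℝ} (ht : 0 ≤ t) : 0 < deriv f t := by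
  have hmono : StrictMonoOn (fun s => -deriv f s) (Ici 0) :=
    strictMonoOn_Ici_of_hasDerivAt_pos (fun s => (hsol.hasDerivAt_deriv s).neg)
      fun s hs => neg_pos.2 (hsol.iteratedDeriv_two_neg hm h0 hs.le)
  exact neg_lt_zero.1 <| hmono.lt_of_le_of_tendsto (fun _ _ => le_rfl) (by simpa using hlim.neg) ht

theorem strictMonoOn (hsol : IsSimilaritySolution m f) (hm : 2 * m + 1 < 0)
    (h0 : iteratedDeriv 2 f 0 < 0) (hlim : Tendsto (deriv f) atTop (𝓝 0)) : StrictMonoOn f (Ici 0) :=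
  strictMonoOn_Ici_of_hasDerivAt_pos hsol.hasDerivAt_self fun _ hs =>
    hsol.deriv_pos hm h0 hlim hs.le

theorem apply_neg (hsol : IsSimilaritySolution m f) (hm : m + 2 ≤ 0)
    (h0 : iteratedDeriv 2 f 0 < 0) (hlim : Tendsto (deriv f) atTop (𝓝 0)) {t : ℝ}
    (ht : 0 ≤ t) : f t < 0 := by
  have hm' : 2 * m + 1 < 0 := by linarith
  by_contra! hnonneg
  set a := t + 1
  have hfa : ∀ s ≥ a, 0 < f s := fun s hs => hnonneg.trans_lt
    (hsol.strictMonoOn hm' h0 hlim ht (mem_Ici.2 (by linarith)) (by linarith))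
  have hanti : AntitoneOn (iteratedDeriv 2 f) (Ici a) :=
    antitoneOn_Ici_of_hasDerivAt_nonpos hsol.hasDerivAt_iteratedDeriv_two fun s hs => by
      have hs0 : 0 ≤ s := by linarith
      rw [hsol.iteratedDeriv_three_eq hs0]
      nlinarith [sq_nonneg (deriv f s), mul_pos (hfa s hs.le)
        (neg_pos.2 (hsol.iteratedDeriv_two_neg hm' h0 hs0))]
  obtain ⟨s, hs, hneg⟩ := exists_lt_of_antitoneOn_deriv hsol.hasDerivAt_deriv hanti
    (hsol.iteratedDeriv_two_neg hm' h0 (by linarith)) 0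
  exact hneg.not_ge (hsol.deriv_pos hm' h0 hlim (by linarith)).le

theorem hasDerivAt_deriv_add_mul_sq (hsol : IsSimilaritySolution m f) (t : ℝ) :
    HasDerivAt (fun s => deriv f s + (m + 2) / 2 * f s ^ 2)
      (iteratedDeriv 2 f t + (m + 2) * (f t * deriv f t)) t := by
  refine ((hsol.hasDerivAt_deriv t).add
    (((hsol.hasDerivAt_self t).pow 2).const_mul ((m + 2) / 2))).congr_deriv ?_
  ring

theorem iteratedDeriv_two_add_mul_pos (hsol : IsSimilaritySolution m f)
    (hm : m + 2 ≤ 0) (h0 : iteratedDeriv 2 f 0 < 0) (hlim : Tendsto (deriv f) atTop (𝓝 0))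
    {t : ℝ} (ht : 0 ≤ t) : 0 < iteratedDeriv 2 f t + (m + 2) * (f t * deriv f t) := by
  have hm' : 2 * m + 1 < 0 := by linarith
  set Q := fun s => iteratedDeriv 2 f s + (m + 2) * (f s * deriv f s)
  set P := fun s => deriv f s + (m + 2) / 2 * f s ^ 2
  -- `Q' = 3 (m+1) f'^2`
  have hQanti : StrictAntiOn Q (Ici 0) := strictAntiOn_Ici_of_hasDerivAt_neg
    (fun s => (hsol.hasDerivAt_iteratedDeriv_two s).add
      (((hsol.hasDerivAt_self s).mul (hsol.hasDerivAt_deriv s)).const_mul (m + 2)))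
    fun s hs => by
      rw [hsol.iteratedDeriv_three_eq hs.le]
      nlinarith [pow_pos (hsol.deriv_pos hm' h0 hlim hs.le) 2]
  have hPbdd : ∀ s ≥ 0, (m + 2) / 2 * f 0 ^ 2 ≤ P s := fun s hs => by
    have hf0 : f 0 ≤ f s := (hsol.strictMonoOn hm' h0 hlim).monotoneOn self_mem_Ici hs hs
    have hsq : f s ^ 2 ≤ f 0 ^ 2 := by nlinarith [hsol.apply_neg hm h0 hlim hs]
    have := mul_le_mul_of_nonpos_left hsq (by linarith : (m + 2) / 2 ≤ 0)
    simp only [P]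
    linarith [hsol.deriv_pos hm' h0 hlim hs]
  have hQnonneg : ∀ s ≥ 0, 0 ≤ Q s := fun s hs => by
    by_contra! hneg
    obtain ⟨x, hx, hlt⟩ := exists_lt_of_antitoneOn_deriv hsol.hasDerivAt_deriv_add_mul_sq
      (hQanti.antitoneOn.mono (Ici_subset_Ici.2 hs)) hneg ((m + 2) / 2 * f 0 ^ 2)
    exact hlt.not_ge (hPbdd x (hs.trans hx))
  exact (hQnonneg (t + 1) (by linarith)).trans_lt
    (hQanti ht (mem_Ici.2 (by linarith)) (lt_add_one t))

theorem deriv_add_mul_sq_neg (hsol : IsSimilaritySolution m f)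
    (hm : m + 2 ≤ 0) (h0 : iteratedDeriv 2 f 0 < 0) (hlim : Tendsto (deriv f) atTop (𝓝 0))
    {t : ℝ} (ht : 0 ≤ t) : deriv f t + (m + 2) / 2 * f t ^ 2 < 0 := by
  have hPmono : StrictMonoOn (fun s => deriv f s + (m + 2) / 2 * f s ^ 2) (Ici 0) :=
    strictMonoOn_Ici_of_hasDerivAt_pos hsol.hasDerivAt_deriv_add_mul_sq
      fun s hs => hsol.iteratedDeriv_two_add_mul_pos hm h0 hlim hs.le
  refine hPmono.lt_of_le_of_tendsto (fun s _ => ?_) hlim ht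
  nlinarith [sq_nonneg (f s)]

end IsSimilaritySolution

theorem stmt_10_general (m : ℝ) (hm : m < -2)
    (f : ℝ → ℝ) (hf : ContDiff ℝ 3 f)
    (hode : ∀ t ≥ (0:ℝ), iteratedDeriv 3 f t + (m + 2) * f t * iteratedDeriv 2 f t
      - (2 * m + 1) * (deriv f t) ^ 2 = 0)
    (h2 : iteratedDeriv 2 f 0 = -1)
    (hlim : Filter.Tendsto (deriv f) Filter.atTop (nhds 0)) :
    ∀ t ≥ (0:ℝ), f t < 0 ∧
      0 < deriv f t / (f t) ^ 2 ∧ deriv f t / (f t) ^ 2 < -(m + 2) / 2 ∧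
      0 < iteratedDeriv 2 f t / (f t) ^ 3 ∧
      iteratedDeriv 2 f t / (f t) ^ 3 < -(m + 2) * (deriv f t / (f t) ^ 2) := by
  have hsol : IsSimilaritySolution m f := ⟨hf, hode⟩
  have hm' : m + 2 ≤ 0 := by linarith
  have h2' : iteratedDeriv 2 f 0 < 0 := by norm_num [h2]
  intro t ht
  have hneg := hsol.apply_neg hm' h2' hlim ht
  have hsq : 0 < f t ^ 2 := sq_pos_of_neg hneg
  have hcube : f t ^ 3 < 0 := Odd.pow_neg (by decide) hneg
  refine ⟨hneg, div_pos (hsol.deriv_pos (by linarith) h2' hlim ht) hsq, ?_,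
    div_pos_of_neg_of_neg (hsol.iteratedDeriv_two_neg (by linarith) h2' ht) hcube, ?_⟩
  · rw [div_lt_iff₀ hsq]
    linarith [hsol.deriv_add_mul_sq_neg hm' h2' hlim ht]
  · have hrw : -(m + 2) * (deriv f t / f t ^ 2) * f t ^ 3 = -((m + 2) * (f t * deriv f t)) := by
      field_simp
    rw [div_lt_iff_of_neg hcube, hrw]
    linarith [hsol.iteratedDeriv_two_add_mul_pos hm' h2' hlim ht]

theorem stmt_10 (m γ : ℝ) (hm : m < -2)
    (f : ℝ → ℝ) (hf : ContDiff ℝ 3 f)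
    (hode : ∀ t ≥ (0:ℝ), iteratedDeriv 3 f t + (m + 2) * f t * iteratedDeriv 2 f t
      - (2 * m + 1) * (deriv f t) ^ 2 = 0)
    (h0 : f 0 = -γ) (h2 : iteratedDeriv 2 f 0 = -1)
    (hlim : Filter.Tendsto (deriv f) Filter.atTop (nhds 0)) :
    ∀ t ≥ (0:ℝ), f t < 0 ∧
      0 < deriv f t / (f t) ^ 2 ∧ deriv f t / (f t) ^ 2 < -(m + 2) / 2 ∧
      0 < iteratedDeriv 2 f t / (f t) ^ 3 ∧
      iteratedDeriv 2 f t / (f t) ^ 3 < -(m + 2) * (deriv f t / (f t) ^ 2) :=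
  stmt_10_general m hm f hf hode h2 hlim
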